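/- Every point (v, z) ∈ ℝ × [0,1]^ℓ whose fractional coordinates are monotone nonincreasing (z_{j+1} ≤ z_j for all j ∈ [ℓ−1]) belongs to the closed convex hull of Ū: it is the limit as λ → 0+ of the convex combination (1−λ)[ z_ℓ (b_ℓ, 1) + Σ_{j=1}^{ℓ−1} u_j (b_j, Σ_{i=1}^j e_i) ] + λ ( v/λ − ((1−λ)/λ)[ z_ℓ b_ℓ + Σ_{j=1}^{ℓ−1} u_j b_j ], 0 ), where u_j = z_j − z_{j+1} ≥ 0, and all points appearing in the combination belong to Ū (the representation is a convex combination after normalizing the weights z_ℓ, u_1, ..., u_{ℓ−1}, and 1 − z_1 which sum appropriately). -/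

import Mathlib

/-- The single-row set `Ū`. -/
def Ubar (ℓ : ℕ) (b : Fin ℓ → ℝ) : Set (ℝ × (Fin ℓ → ℝ)) :=
  {uz | (∀ j, uz.2 j = 0 ∨ uz.2 j = 1) ∧
    ∀ j, 0 ≤ (uz.1 - b j) * uz.2 j ∧ (uz.1 - b j) * (1 - uz.2 j) ≤ 0}

/-!
Put `u_j = z_j - z_{j+1} ≥ 0`. The staircase points `(b_j, 𝟙_{≤ j})` and `(b_ℓ, 𝟙)` lie in `Ū`
and, by telescoping, `z_ℓ (b_ℓ, 𝟙) + ∑ u_j (b_j, 𝟙_{≤ j}) = (B, z)` for some `B`; the weights sum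
to `z_1 ≤ 1`, so `(B, z) ∈ cl conv Ū` as soon as the origin is. Since `(x, 0) ∈ Ū` for `x ≤ min b`
and `(x, 𝟙) ∈ Ū` for `x ≥ max b`, the combinations `(1 - μ) (x, 0) + μ (x + t / μ, 𝟙) → (x + t, 0)`
make `(1, 0)` a recession direction of `cl conv Ū`; this puts every `(x, 0)`, and then `(v, z)`,
in `cl conv Ū`.
-/

open Filter Topology Finset

lemma add_sum_range_sub_succ_mul_ite_le (f : ℕ → ℝ) {r n : ℕ} (hrn : r ≤ n) :
    f n + ∑ k ∈ range n, (f k - f (k + 1)) * (if r ≤ k then 1 else 0) = f r := by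
  induction n, hrn using Nat.le_induction with
  | base =>
    rw [sum_eq_zero fun k hk => by rw [if_neg (not_le.2 (mem_range.1 hk)), mul_zero], add_zero]
  | succ n hrn ih => rw [sum_range_succ, if_pos hrn, ← ih]; ring

lemma last_add_sum_sub_succ_mul_ite_le {ℓ : ℕ} (hℓ : 1 ≤ ℓ) (z : Fin ℓ → ℝ) (r : Fin ℓ) :
    z ⟨ℓ - 1, Nat.sub_lt hℓ Nat.one_pos⟩ +
      ∑ k : Fin (ℓ - 1),
        (z ⟨(k : ℕ), Nat.lt_of_lt_of_le k.isLt (Nat.sub_le ℓ 1)⟩ -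
            z ⟨(k : ℕ) + 1, Nat.add_lt_of_lt_sub k.isLt⟩) *
          (if (r : ℕ) ≤ (k : ℕ) then 1 else 0) = z r := by
  set f : ℕ → ℝ := fun n => if h : n < ℓ then z ⟨n, h⟩ else 0
  have hf : ∀ n (h : n < ℓ), z ⟨n, h⟩ = f n := fun n h => by simp [f, h]
  rw [hf _ r.isLt]
  simp only [hf]
  rw [Fin.sum_univ_eq_sum_range (fun k => (f k - f (k + 1)) * if (r : ℕ) ≤ k then 1 else 0)]
  exact add_sum_range_sub_succ_mul_ite_le f (by omega)

lemma Convex.sum_smul_mem_of_zero_mem {E ι : Type*} [AddCommGroup E] [Module ℝ E] {s : Set E}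
    (hs : Convex ℝ s) (h0 : (0 : E) ∈ s) {t : Finset ι} {w : ι → ℝ} {p : ι → E}
    (hw : ∀ i ∈ t, 0 ≤ w i) (hw1 : ∑ i ∈ t, w i ≤ 1) (hp : ∀ i ∈ t, p i ∈ s) :
    ∑ i ∈ t, w i • p i ∈ s := by
  rcases (sum_nonneg hw).eq_or_lt with hzero | hpos
  · have hw0 := (sum_eq_zero_iff_of_nonneg hw).1 hzero.symm
    rwa [sum_eq_zero fun i hi => by rw [hw0 i hi, zero_smul]]
  · have hcm := hs.centerMass_mem hw hpos hp
    have := hs.smul_mem_of_zero_mem h0 hcm ⟨hpos.le, hw1⟩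
    rwa [centerMass, smul_inv_smul₀ hpos.ne'] at this

lemma add_mem_closure_of_forall_add_smul_mem {E : Type*} [TopologicalSpace E] [AddCommGroup E]
    [Module ℝ E] [ContinuousAdd E] [ContinuousSMul ℝ E] {s : Set E} (hs : Convex ℝ s)
    {a c d : E} (ha : a ∈ s) (hc : ∀ t : ℝ, 0 ≤ t → c + t • d ∈ s) : a + d ∈ closure s := by
  have hmem : ∀ μ ∈ Set.Ioc (0 : ℝ) 1, (1 - μ) • a + μ • c + d ∈ s := by
    rintro μ ⟨hμ0, hμ1⟩
    have := hs ha (hc μ⁻¹ (inv_nonneg.2 hμ0.le)) (sub_nonneg.2 hμ1) hμ0.le (sub_add_cancel 1 μ)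
    rwa [smul_add, smul_smul, mul_inv_cancel₀ hμ0.ne', one_smul, ← add_assoc] at this
  have htend : Tendsto (fun μ : ℝ => (1 - μ) • a + μ • c + d) (𝓝[>] 0) (𝓝 (a + d)) := by
    have hcont : Continuous (fun μ : ℝ => (1 - μ) • a + μ • c + d) := by fun_prop
    simpa using (hcont.tendsto 0).mono_left nhdsWithin_le_nhds
  exact mem_closure_of_tendsto htend (mem_of_superset (Ioc_mem_nhdsGT one_pos) hmem)

lemma tendsto_one_sub_smul_add_smul_mk_zero {E : Type*} [TopologicalSpace E] [AddCommGroup E]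
    [Module ℝ E] [ContinuousSMul ℝ E] (B v : ℝ) (z : E) :
    Tendsto (fun lam : ℝ => (1 - lam) • ((B, z) : ℝ × E) +
        lam • ((v / lam - ((1 - lam) / lam) * B, 0) : ℝ × E)) (𝓝[>] 0) (𝓝 (v, z)) := by
  have hcont : Continuous fun lam : ℝ => ((v, (1 - lam) • z) : ℝ × E) := by fun_prop
  have hlim : Tendsto (fun lam : ℝ => ((v, (1 - lam) • z) : ℝ × E)) (𝓝[>] 0) (𝓝 (v, z)) := by
    simpa using (hcont.tendsto 0).mono_left nhdsWithin_le_nhds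
  refine hlim.congr' ?_
  filter_upwards [self_mem_nhdsWithin] with lam (hlam : 0 < lam)
  ext
  · simp only [Prod.fst_add, Prod.smul_fst, smul_eq_mul]
    field_simp
    ring
  · simp

lemma mk_mem_closure_of_mk_mem {E : Type*} [TopologicalSpace E] [AddCommGroup E] [Module ℝ E]
    [ContinuousAdd E] [ContinuousSMul ℝ E] {s : Set (ℝ × E)} (hs : Convex ℝ s) {B : ℝ} {z : E}
    (hBz : (B, z) ∈ s) (h0 : ∀ x : ℝ, ((x, 0) : ℝ × E) ∈ s) (v : ℝ) : (v, z) ∈ closure s := by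
  simpa using add_mem_closure_of_forall_add_smul_mem hs hBz (c := 0) (d := (v - B, 0))
    fun t _ => by simpa using h0 (t * (v - B))

section Ubar

variable {ℓ : ℕ} {b : Fin ℓ → ℝ}

lemma mk_mem_Ubar_iff {v : ℝ} {z : Fin ℓ → ℝ} :
    (v, z) ∈ Ubar ℓ b ↔ ∀ j, (z j = 0 ∧ v ≤ b j) ∨ (z j = 1 ∧ b j ≤ v) := by
  simp only [Ubar, Set.mem_ofPred_eq, ← forall_and]
  refine forall_congr' fun j => ⟨?_, ?_⟩
  · rintro ⟨h0 | h1, hge, hle⟩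
    · exact Or.inl ⟨h0, by simpa [h0] using hle⟩
    · exact Or.inr ⟨h1, by simpa [h1] using hge⟩
  · rintro (⟨h0, hv⟩ | ⟨h1, hv⟩)
    · exact ⟨Or.inl h0, by simp [h0, hv]⟩
    · exact ⟨Or.inr h1, by simp [h1, hv]⟩

lemma mk_zero_mem_Ubar {x : ℝ} (hx : ∀ j, x ≤ b j) : ((x, 0) : ℝ × (Fin ℓ → ℝ)) ∈ Ubar ℓ b :=
  mk_mem_Ubar_iff.2 fun j => Or.inl ⟨rfl, hx j⟩

lemma mk_one_mem_Ubar {x : ℝ} (hx : ∀ j, b j ≤ x) :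
    ((x, fun _ => 1) : ℝ × (Fin ℓ → ℝ)) ∈ Ubar ℓ b :=
  mk_mem_Ubar_iff.2 fun j => Or.inr ⟨rfl, hx j⟩

lemma mk_ite_le_mem_Ubar (hb : Monotone b) (i : Fin ℓ) :
    ((b i, fun r : Fin ℓ => if (r : ℕ) ≤ (i : ℕ) then 1 else 0) : ℝ × (Fin ℓ → ℝ)) ∈ Ubar ℓ b := by
  refine mk_mem_Ubar_iff.2 fun j => ?_
  by_cases hji : (j : ℕ) ≤ i
  · exact Or.inr ⟨if_pos hji, hb hji⟩
  · exact Or.inl ⟨if_neg hji, hb (Fin.le_def.2 (by omega))⟩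

lemma mk_zero_mem_closure_convexHull_Ubar (x : ℝ) :
    ((x, 0) : ℝ × (Fin ℓ → ℝ)) ∈ closure (convexHull ℝ (Ubar ℓ b)) := by
  obtain ⟨m, hm⟩ := (Set.finite_range b).bddBelow
  obtain ⟨M, hM⟩ := (Set.finite_range b).bddAbove
  have hlow : ∀ j, min x m ≤ b j := fun j => (min_le_right x m).trans (hm ⟨j, rfl⟩)
  have hray : ∀ t : ℝ, 0 ≤ t → ((M, fun _ => 1) : ℝ × (Fin ℓ → ℝ)) + t • (x - min x m, 0) ∈
      convexHull ℝ (Ubar ℓ b) := fun t ht => by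
    refine subset_convexHull ℝ _ ?_
    have hxm : 0 ≤ x - min x m := sub_nonneg.2 (min_le_left x m)
    simpa using mk_one_mem_Ubar (b := b) fun j => le_add_of_le_of_nonneg (hM ⟨j, rfl⟩)
      (mul_nonneg ht hxm)
  simpa using add_mem_closure_of_forall_add_smul_mem (convex_convexHull ℝ _)
    (subset_convexHull ℝ _ (mk_zero_mem_Ubar hlow)) hray

end Ubar

lemma staircase_sum_eq {ℓ : ℕ} (hℓ : 1 ≤ ℓ) (b z : Fin ℓ → ℝ) :
    z ⟨ℓ - 1, Nat.sub_lt hℓ Nat.one_pos⟩ •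
        ((b ⟨ℓ - 1, Nat.sub_lt hℓ Nat.one_pos⟩, fun _ => (1 : ℝ)) : ℝ × (Fin ℓ → ℝ)) +
      ∑ k : Fin (ℓ - 1),
        (z ⟨(k : ℕ), Nat.lt_of_lt_of_le k.isLt (Nat.sub_le ℓ 1)⟩ -
            z ⟨(k : ℕ) + 1, Nat.add_lt_of_lt_sub k.isLt⟩) •
          ((b ⟨(k : ℕ), Nat.lt_of_lt_of_le k.isLt (Nat.sub_le ℓ 1)⟩,
            fun r : Fin ℓ => if (r : ℕ) ≤ (k : ℕ) then (1 : ℝ) else 0) : ℝ × (Fin ℓ → ℝ)) =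
      (z ⟨ℓ - 1, Nat.sub_lt hℓ Nat.one_pos⟩ * b ⟨ℓ - 1, Nat.sub_lt hℓ Nat.one_pos⟩ +
        ∑ k : Fin (ℓ - 1),
          (z ⟨(k : ℕ), Nat.lt_of_lt_of_le k.isLt (Nat.sub_le ℓ 1)⟩ -
              z ⟨(k : ℕ) + 1, Nat.add_lt_of_lt_sub k.isLt⟩) *
            b ⟨(k : ℕ), Nat.lt_of_lt_of_le k.isLt (Nat.sub_le ℓ 1)⟩, z) := by
  ext r
  · simp [Prod.fst_sum]
  · simp only [Prod.snd_add, Prod.smul_snd, Prod.snd_sum, Pi.add_apply, Pi.smul_apply,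
      Finset.sum_apply, smul_eq_mul, mul_one]
    exact last_add_sum_sub_succ_mul_ite_le hℓ z r

lemma staircase_sum_mem_closure_convexHull_Ubar {ℓ : ℕ} (hℓ : 1 ≤ ℓ) {b : Fin ℓ → ℝ}
    (hb : Monotone b) {z : Fin ℓ → ℝ} (hz01 : ∀ j, z j ∈ Set.Icc (0 : ℝ) 1)
    (hmono : ∀ j : Fin ℓ, ∀ h : (j : ℕ) + 1 < ℓ, z ⟨(j : ℕ) + 1, h⟩ ≤ z j) :
    z ⟨ℓ - 1, Nat.sub_lt hℓ Nat.one_pos⟩ •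
        ((b ⟨ℓ - 1, Nat.sub_lt hℓ Nat.one_pos⟩, fun _ => (1 : ℝ)) : ℝ × (Fin ℓ → ℝ)) +
      ∑ k : Fin (ℓ - 1),
        (z ⟨(k : ℕ), Nat.lt_of_lt_of_le k.isLt (Nat.sub_le ℓ 1)⟩ -
            z ⟨(k : ℕ) + 1, Nat.add_lt_of_lt_sub k.isLt⟩) •
          ((b ⟨(k : ℕ), Nat.lt_of_lt_of_le k.isLt (Nat.sub_le ℓ 1)⟩,
            fun r : Fin ℓ => if (r : ℕ) ≤ (k : ℕ) then (1 : ℝ) else 0) : ℝ × (Fin ℓ → ℝ)) ∈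
      closure (convexHull ℝ (Ubar ℓ b)) := by
  have hweights := last_add_sum_sub_succ_mul_ite_le hℓ z ⟨0, hℓ⟩
  simp only [Nat.zero_le, if_true, mul_one] at hweights
  have hmem := (convex_convexHull ℝ (Ubar ℓ b)).closure.sum_smul_mem_of_zero_mem
    (by simpa only [Prod.mk_zero_zero] using mk_zero_mem_closure_convexHull_Ubar 0) (t := univ)
    (w := fun i : Option (Fin (ℓ - 1)) => i.elim (z ⟨ℓ - 1, Nat.sub_lt hℓ Nat.one_pos⟩)
      fun k => z ⟨(k : ℕ), Nat.lt_of_lt_of_le k.isLt (Nat.sub_le ℓ 1)⟩ -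
        z ⟨(k : ℕ) + 1, Nat.add_lt_of_lt_sub k.isLt⟩)
    (p := fun i => i.elim (b ⟨ℓ - 1, Nat.sub_lt hℓ Nat.one_pos⟩, fun _ => 1)
      fun k => (b ⟨(k : ℕ), Nat.lt_of_lt_of_le k.isLt (Nat.sub_le ℓ 1)⟩,
        fun r : Fin ℓ => if (r : ℕ) ≤ (k : ℕ) then 1 else 0))
    (by
      rintro (_ | k) -
      · exact (hz01 _).1
      · exact sub_nonneg.2 (hmono ⟨k, _⟩ (Nat.add_lt_of_lt_sub k.isLt)))
    (by simpa only [Fintype.sum_option, Option.elim, hweights] using (hz01 _).2)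
    (by
      rintro (_ | k) - <;> refine subset_closure (subset_convexHull ℝ _ ?_)
      · exact mk_one_mem_Ubar fun j => hb (Fin.le_def.2 (Nat.le_sub_one_of_lt j.isLt))
      · exact mk_ite_le_mem_Ubar hb _)
  simpa [Fintype.sum_option] using hmem

/-- Every `(v, z) ∈ ℝ × [0,1]^ℓ` with `z_{j+1} ≤ z_j` belongs to `cl conv(Ū)`: it is the
limit as `λ → 0⁺` of the combination
`(1−λ)[z_ℓ (b_ℓ, 𝟙) + Σ_{j=1}^{ℓ−1} u_j (b_j, Σ_{i≤j} e_i)] + λ (v/λ − ((1−λ)/λ)[z_ℓ b_ℓ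
+ Σ u_j b_j], 0)` with `u_j = z_j − z_{j+1} ≥ 0`; the points `(b_ℓ, 𝟙)` and `(b_j, 𝟙_j)`
belong to `Ū`, and the remaining point of the combination belongs to `cl conv(Ū)`. -/
theorem stmt4 (ℓ : ℕ) (hℓ : 1 ≤ ℓ) (b : Fin ℓ → ℝ) (hb : StrictMono b)
    (v : ℝ) (z : Fin ℓ → ℝ) (hz01 : ∀ j, z j ∈ Set.Icc (0 : ℝ) 1)
    (hmono : ∀ j : Fin ℓ, ∀ h : (j : ℕ) + 1 < ℓ, z ⟨(j : ℕ) + 1, h⟩ ≤ z j) :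
    (v, z) ∈ closure (convexHull ℝ (Ubar ℓ b)) ∧
    Filter.Tendsto (fun lam : ℝ =>
        ((1 - lam) •
          (z ⟨ℓ - 1, Nat.sub_lt hℓ Nat.one_pos⟩ •
              ((b ⟨ℓ - 1, Nat.sub_lt hℓ Nat.one_pos⟩, fun _ => (1 : ℝ)) : ℝ × (Fin ℓ → ℝ)) +
            ∑ k : Fin (ℓ - 1),
              (z ⟨(k : ℕ), Nat.lt_of_lt_of_le k.isLt (Nat.sub_le ℓ 1)⟩ -
                  z ⟨(k : ℕ) + 1, Nat.add_lt_of_lt_sub k.isLt⟩) •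
                ((b ⟨(k : ℕ), Nat.lt_of_lt_of_le k.isLt (Nat.sub_le ℓ 1)⟩,
                  fun r : Fin ℓ => if (r : ℕ) ≤ (k : ℕ) then (1 : ℝ) else 0) :
                  ℝ × (Fin ℓ → ℝ))) +
          lam •
            ((v / lam - ((1 - lam) / lam) *
                (z ⟨ℓ - 1, Nat.sub_lt hℓ Nat.one_pos⟩ * b ⟨ℓ - 1, Nat.sub_lt hℓ Nat.one_pos⟩ +
                  ∑ k : Fin (ℓ - 1),
                    (z ⟨(k : ℕ), Nat.lt_of_lt_of_le k.isLt (Nat.sub_le ℓ 1)⟩ -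
                        z ⟨(k : ℕ) + 1, Nat.add_lt_of_lt_sub k.isLt⟩) *
                      b ⟨(k : ℕ), Nat.lt_of_lt_of_le k.isLt (Nat.sub_le ℓ 1)⟩),
              (0 : Fin ℓ → ℝ)) : ℝ × (Fin ℓ → ℝ))))
      (nhdsWithin 0 (Set.Ioi 0)) (nhds (v, z)) ∧
    ((b ⟨ℓ - 1, Nat.sub_lt hℓ Nat.one_pos⟩, fun _ => (1 : ℝ)) : ℝ × (Fin ℓ → ℝ)) ∈ Ubar ℓ b ∧
    (∀ k : Fin (ℓ - 1),
      ((b ⟨(k : ℕ), Nat.lt_of_lt_of_le k.isLt (Nat.sub_le ℓ 1)⟩,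
        fun r : Fin ℓ => if (r : ℕ) ≤ (k : ℕ) then (1 : ℝ) else 0) : ℝ × (Fin ℓ → ℝ)) ∈
        Ubar ℓ b) ∧
    (∀ lam ∈ Set.Ioo (0 : ℝ) 1,
      ((v / lam - ((1 - lam) / lam) *
          (z ⟨ℓ - 1, Nat.sub_lt hℓ Nat.one_pos⟩ * b ⟨ℓ - 1, Nat.sub_lt hℓ Nat.one_pos⟩ +
            ∑ k : Fin (ℓ - 1),
              (z ⟨(k : ℕ), Nat.lt_of_lt_of_le k.isLt (Nat.sub_le ℓ 1)⟩ -
                  z ⟨(k : ℕ) + 1, Nat.add_lt_of_lt_sub k.isLt⟩) *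
                b ⟨(k : ℕ), Nat.lt_of_lt_of_le k.isLt (Nat.sub_le ℓ 1)⟩),
        (0 : Fin ℓ → ℝ)) : ℝ × (Fin ℓ → ℝ)) ∈ closure (convexHull ℝ (Ubar ℓ b))) := by
  have hconv := (convex_convexHull ℝ (Ubar ℓ b)).closure
  have hstair := staircase_sum_mem_closure_convexHull_Ubar hℓ hb.monotone hz01 hmono
  rw [staircase_sum_eq hℓ] at hstair ⊢
  refine ⟨?_, tendsto_one_sub_smul_add_smul_mk_zero _ v z,
    mk_one_mem_Ubar fun j => hb.monotone (Fin.le_def.2 (Nat.le_sub_one_of_lt j.isLt)),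
    fun k => mk_ite_le_mem_Ubar hb.monotone _, fun _ _ => mk_zero_mem_closure_convexHull_Ubar _⟩
  exact closure_closure (s := convexHull ℝ (Ubar ℓ b)) ▸
    mk_mem_closure_of_mk_mem hconv hstair mk_zero_mem_closure_convexHull_Ubar v
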